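/- arXiv:2006.12929 — 2 statements merged into one kernel-verified Lean document; each statement's English description precedes it below -/
import Mathlib

section
/- For real numbers L, A, D ≥ 0, one has min(3L − D, (3/2)L + (1/2)D) + min((3/2)A + 2D, 3A + D) − D ≤ (12/5)(L + A). -/
/-! Bound each minimum by a convex combination of its two arguments, with weights `(3/5, 2/5)`
and `(2/5, 3/5)`: these combinations are `(12/5) L - (2/5) D` and `(12/5) A + (7/5) D`, so the
`D`-terms cancel against `- D`. -/

theorem stmt_2_general (L A D : ℝ) :
    min (3 * L - D) ((3/2) * L + (1/2) * D)
      + min ((3/2) * A + 2 * D) (3 * A + D) - D ≤ (12/5) * (L + A) := by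
  have hpath := Convex.min_le_combo (3 * L - D) ((3/2) * L + (1/2) * D)
    (a := (3/5 : ℝ)) (b := 2/5) (by norm_num) (by norm_num) (by norm_num)
  have hcrane := Convex.min_le_combo ((3/2) * A + 2 * D) (3 * A + D)
    (a := (2/5 : ℝ)) (b := 3/5) (by norm_num) (by norm_num) (by norm_num)
  simp only [smul_eq_mul] at hpath hcrane
  linarith

theorem stmt_2 (L A D : ℝ) (hL : 0 ≤ L) (hA : 0 ≤ A) (hD : 0 ≤ D) :
    min (3 * L - D) ((3/2) * L + (1/2) * D)
      + min ((3/2) * A + 2 * D) (3 * A + D) - D ≤ (12/5) * (L + A) :=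
  stmt_2_general L A D
end

section
/- Let d be a metric on a finite set V and let W = (v₀, v₁, …, v_m) be a walk in the complete graph on V starting at s = v₀ and ending at t = v_m that visits every vertex of V. Then there exists a Hamiltonian path from s to t whose length is at most the length of W. -/
/-!
Keep `s`, then the remaining vertices of the walk other than `s` and `t` without repetitions,
then `t`. This is a sublist of the support of the walk that still covers every vertex, and by the
triangle inequality deleting points from a sequence never increases its length.
-/

namespace List

section PathLength

variable {X : Type*} [PseudoMetricSpace X]

noncomputable def pathLength : List X → ℝ
  | [] => 0
  | [_] => 0
  | a :: b :: l => dist a b + pathLength (b :: l)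

theorem pathLength_cons_le_cons_cons (a b : X) :
    ∀ l : List X, pathLength (a :: l) ≤ pathLength (a :: b :: l)
  | [] => by simp [pathLength]
  | c :: l => by
    simp only [pathLength]
    linarith [dist_triangle a b c]

theorem Sublist.pathLength_cons_le {l₁ l₂ : List X} (h : l₁ <+ l₂) (a : X) :
    pathLength (a :: l₁) ≤ pathLength (a :: l₂) := by
  induction h generalizing a with
  | slnil => rfl
  | cons b _ ih =>
    exact (pathLength_cons_le_cons_cons a b _).trans (add_le_add_right (ih b) _)
  | cons_cons b _ ih => exact add_le_add_right (ih b) _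

end PathLength

theorem exists_sublist_nodup_cons_append_superset {α : Type*} [DecidableEq α] {s t : α}
    (hst : s ≠ t) (l : List α) :
    ∃ l', l' <+ l ∧ (s :: (l' ++ [t])).Nodup ∧ s :: (l ++ [t]) ⊆ s :: (l' ++ [t]) := by
  refine ⟨(l.filter fun x => x ≠ s ∧ x ≠ t).dedup,
    (dedup_sublist _).trans filter_sublist, ?_, ?_⟩
  · simp [nodup_append, nodup_dedup, mem_dedup, hst]
  · intro x hx
    simp only [mem_cons, mem_append, mem_dedup, mem_filter, decide_eq_true_eq] at hx ⊢
    tauto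

end List

namespace SimpleGraph.Walk

theorem sum_map_edges_dist_eq_pathLength {X : Type*} [PseudoMetricSpace X] {G : SimpleGraph X}
    {u v : X} (p : G.Walk u v) :
    (p.edges.map (Sym2.lift ⟨Dist.dist, fun a b => _root_.dist_comm a b⟩)).sum =
      p.support.pathLength := by
  induction p with
  | nil => simp [List.pathLength]
  | cons _ p ih => rw [edges_cons, List.map_cons, List.sum_cons, ih, support_cons,
      ← p.cons_tail_support, List.pathLength, p.cons_tail_support, Sym2.lift_mk]

theorem exists_support_eq_cons_append {V : Type*} {G : SimpleGraph V} {u v : V}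
    (p : G.Walk u v) (huv : u ≠ v) : ∃ l, p.support = u :: (l ++ [v]) := by
  cases p with
  | nil => exact absurd rfl huv
  | cons _ q =>
    refine ⟨q.support.dropLast, ?_⟩
    conv_lhs => rw [support_cons, ← List.dropLast_append_getLast q.support_ne_nil,
      q.getLast_support]

theorem exists_top_support_eq {V : Type*} {s t : V} {l : List V}
    (hl : (s :: (l ++ [t])).IsChain (· ≠ ·)) :
    ∃ P : (⊤ : SimpleGraph V).Walk s t, P.support = s :: (l ++ [t]) :=
  ⟨(ofSupport _ (List.cons_ne_nil _ _) hl).copy (by simp) (by simp),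
    (support_copy _ _ _).trans (support_ofSupport _ _)⟩

end SimpleGraph.Walk

theorem stmt_12_general {V : Type*} [DecidableEq V] [MetricSpace V]
    (s t : V) (hst : s ≠ t) (W : (⊤ : SimpleGraph V).Walk s t)
    (hW : ∀ v : V, v ∈ W.support) :
    ∃ P : (⊤ : SimpleGraph V).Walk s t, P.IsHamiltonian ∧
      (P.edges.map (Sym2.lift ⟨dist, fun a b => dist_comm a b⟩)).sum ≤
      (W.edges.map (Sym2.lift ⟨dist, fun a b => dist_comm a b⟩)).sum := by
  obtain ⟨l, hW_support⟩ := W.exists_support_eq_cons_append hst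
  obtain ⟨l', hsub, hnodup, hcover⟩ := List.exists_sublist_nodup_cons_append_superset hst l
  obtain ⟨P, hP_support⟩ := SimpleGraph.Walk.exists_top_support_eq hnodup.isChain
  have hP_path : P.IsPath := SimpleGraph.Walk.IsPath.mk' (hP_support ▸ hnodup)
  refine ⟨P, hP_path.isHamiltonian_of_mem fun v => ?_, ?_⟩
  · exact hP_support ▸ hcover (hW_support ▸ hW v)
  · rw [SimpleGraph.Walk.sum_map_edges_dist_eq_pathLength,
      SimpleGraph.Walk.sum_map_edges_dist_eq_pathLength, hP_support, hW_support]
    exact (hsub.append_right [t]).pathLength_cons_le s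

/-- Short-cutting: given a walk `W` from `s` to `t` in the complete graph on a
finite metric space that visits every vertex, there is a Hamiltonian `s`–`t`
path whose length is at most the length of `W`. -/
theorem stmt_12 {V : Type*} [Fintype V] [DecidableEq V] [MetricSpace V]
    (s t : V) (hst : s ≠ t) (W : (⊤ : SimpleGraph V).Walk s t)
    (hW : ∀ v : V, v ∈ W.support) :
    ∃ P : (⊤ : SimpleGraph V).Walk s t, P.IsHamiltonian ∧
      (P.edges.map (Sym2.lift ⟨dist, fun a b => dist_comm a b⟩)).sum ≤
      (W.edges.map (Sym2.lift ⟨dist, fun a b => dist_comm a b⟩)).sum :=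
  stmt_12_general s t hst W hW
end
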